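/- (Erdős–Mordell Inequality) Let P be a point inside or on the boundary of a triangle ABC in the Euclidean plane. Then the sum of the distances from P to the three vertices is at least twice the sum of the distances from P to the three side lines: dist P A + dist P B + dist P C ≥ 2 · (d(P, line BC) + d(P, line CA) + d(P, line AB)). -/

import Mathlib

/-!
Mordell's vertex inequality `a · PA ≥ c · d_b + b · d_c` (sides `a = |BC|`, `b = |CA|`,
`c = |AB|`; `d_b`, `d_c` the distances from `P` to the lines `CA`, `AB`) is divided by `a` and
summed over the three vertices; each distance then gets a coefficient `p / q + q / p ≥ 2`.

For the vertex inequality put `x = A - P`, `u = B - A`, `v = C - A` and let `ω` be the area form.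
As `P` lies in the angle at `A`, `ω x u` and `ω x v` have opposite signs, so
`b c (c d_b + b d_c) = ‖u‖² |ω x v| + ‖v‖² |ω x u| = |ω x (‖v‖² u - ‖u‖² v)|
  ≤ ‖x‖ ‖‖v‖² u - ‖u‖² v‖ = ‖x‖ a b c`.
-/

open Module

theorem norm_sq_smul_sub_norm_sq_smul {V : Type*} [NormedAddCommGroup V] [InnerProductSpace ℝ V]
    (u v : V) : ‖‖v‖ ^ 2 • u - ‖u‖ ^ 2 • v‖ = ‖u‖ * ‖v‖ * ‖u - v‖ := by
  rw [← sq_eq_sq₀ (norm_nonneg _) (by positivity), mul_pow, norm_sub_sq_real, norm_sub_sq_real,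
    norm_smul, norm_smul, inner_smul_left, inner_smul_right]
  simp only [Real.norm_eq_abs, abs_pow, abs_norm, RCLike.conj_to_real]
  ring

theorem two_le_div_add_div {p q : ℝ} (hp : 0 < p) (hq : 0 < q) : 2 ≤ p / q + q / p := by
  rw [div_add_div _ _ hq.ne' hp.ne', le_div_iff₀ (by positivity)]
  nlinarith [sq_nonneg (p - q)]

theorem two_mul_add_add_le_of_mul_add_mul_le {a b c da db dc RA RB RC : ℝ}
    (ha : 0 < a) (hb : 0 < b) (hc : 0 < c) (hda : 0 ≤ da) (hdb : 0 ≤ db) (hdc : 0 ≤ dc)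
    (hA : c * db + b * dc ≤ a * RA) (hB : a * dc + c * da ≤ b * RB)
    (hC : b * da + a * db ≤ c * RC) :
    2 * (da + db + dc) ≤ RA + RB + RC := by
  have hA' : c / a * db + b / a * dc ≤ RA := by
    rw [div_mul_eq_mul_div, div_mul_eq_mul_div, ← add_div, div_le_iff₀ ha]; linarith
  have hB' : a / b * dc + c / b * da ≤ RB := by
    rw [div_mul_eq_mul_div, div_mul_eq_mul_div, ← add_div, div_le_iff₀ hb]; linarith
  have hC' : b / c * da + a / c * db ≤ RC := by
    rw [div_mul_eq_mul_div, div_mul_eq_mul_div, ← add_div, div_le_iff₀ hc]; linarith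
  have hda' := mul_le_mul_of_nonneg_right (two_le_div_add_div hc hb) hda
  have hdb' := mul_le_mul_of_nonneg_right (two_le_div_add_div hc ha) hdb
  have hdc' := mul_le_mul_of_nonneg_right (two_le_div_add_div hb ha) hdc
  linarith

section AreaForm

variable {V : Type*} [NormedAddCommGroup V] [InnerProductSpace ℝ V] [Fact (finrank ℝ V = 2)]
  (o : Orientation ℝ V (Fin 2))

local notation "ω" => o.areaForm

theorem infDist_affineSpan_pair_le {A B : V} (hAB : A ≠ B) (P : V) :
    Metric.infDist P (affineSpan ℝ {A, B}) ≤ |ω (A - P) (B - P)| / ‖A - B‖ := by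
  have hAB' : ‖B - A‖ ≠ 0 := norm_ne_zero_iff.2 (sub_ne_zero.2 hAB.symm)
  obtain ⟨t, ht⟩ : ∃ t : ℝ, t * ‖B - A‖ ^ 2 = -inner ℝ (B - A) (A - P) :=
    ⟨_, div_mul_cancel₀ _ (pow_ne_zero 2 hAB')⟩
  have horth : inner ℝ (B - A) (A - P + t • (B - A)) = 0 := by
    rw [inner_add_right, inner_smul_right, real_inner_self_eq_norm_sq, ht]
    ring
  have hfoot : ω (A - P) (B - P) = -ω (B - A) (A - P + t • (B - A)) := by
    rw [show B - P = (B - A) + (A - P) by abel]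
    simp only [map_add, map_smul, o.areaForm_apply_self, smul_eq_mul,
      o.areaForm_swap (A - P) (B - A)]
    ring
  refine (Metric.infDist_le_dist_of_mem (AffineMap.lineMap_mem_affineSpan_pair t A B)).trans_eq ?_
  rw [hfoot, abs_neg, o.abs_areaForm_of_orthogonal horth, norm_sub_rev A B,
    mul_div_cancel_left₀ _ hAB', AffineMap.lineMap_apply_module', dist_eq_norm']
  congr 1
  abel

theorem areaForm_mul_areaForm_nonneg_of_mem_convexHull {A B C P : V}
    (hP : P ∈ convexHull ℝ {A, B, C}) :
    0 ≤ ω (A - P) (B - P) * ω (C - P) (A - P) := by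
  rw [convexHull_insert (Set.insert_nonempty _ _), convexHull_pair] at hP
  simp only [mem_convexJoin, Set.mem_singleton_iff, exists_eq_left] at hP
  obtain ⟨Q, ⟨t, t', ht, ht', htt, rfl⟩, s, s', hs, hs', hss, rfl⟩ := hP
  obtain rfl : s = 1 - s' := by linarith
  obtain rfl : t = 1 - t' := by linarith
  set b := s' * (1 - t')
  set c := s' * t'
  have hA : A - ((1 - s') • A + s' • ((1 - t') • B + t' • C)) =
      -(b • (B - A) + c • (C - A)) := by
    module
  have hB : B - ((1 - s') • A + s' • ((1 - t') • B + t' • C)) =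
      (1 - b) • (B - A) - c • (C - A) := by
    module
  have hC : C - ((1 - s') • A + s' • ((1 - t') • B + t' • C)) =
      -b • (B - A) + (1 - c) • (C - A) := by
    module
  rw [hA, hB, hC]
  generalize B - A = u, C - A = v
  simp only [map_add, map_sub, map_neg, map_smul, LinearMap.add_apply, LinearMap.neg_apply,
    LinearMap.smul_apply, o.areaForm_apply_self, smul_eq_mul, o.areaForm_swap v u]
  -- the two factors are `c * ω u v` and `b * ω u v`
  have : 0 ≤ b * c * ω u v ^ 2 := by positivity
  linarith

theorem norm_sq_mul_abs_areaForm_add_le {x u v : V} (h : ω x u * ω x v ≤ 0) :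
    ‖u‖ ^ 2 * |ω x v| + ‖v‖ ^ 2 * |ω x u| ≤ ‖x‖ * (‖u‖ * ‖v‖ * ‖u - v‖) := by
  have hsign : 0 ≤ (‖v‖ ^ 2 * ω x u) * (-(‖u‖ ^ 2 * ω x v)) := by
    rw [mul_neg, mul_mul_mul_comm, ← mul_neg]
    exact mul_nonneg (by positivity) (neg_nonneg.2 h)
  calc ‖u‖ ^ 2 * |ω x v| + ‖v‖ ^ 2 * |ω x u|
      = |‖v‖ ^ 2 * ω x u + -(‖u‖ ^ 2 * ω x v)| := by
        rw [(abs_add_eq_add_abs_iff _ _).2 (mul_nonneg_iff.1 hsign), abs_neg, abs_mul, abs_mul,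
          abs_sq, abs_sq, add_comm]
    _ = |ω x (‖v‖ ^ 2 • u - ‖u‖ ^ 2 • v)| := by
        rw [map_sub, map_smul, map_smul, smul_eq_mul, smul_eq_mul, sub_eq_add_neg]
    _ ≤ ‖x‖ * (‖u‖ * ‖v‖ * ‖u - v‖) := by
        rw [← norm_sq_smul_sub_norm_sq_smul]
        exact o.abs_areaForm_le _ _

theorem mul_abs_areaForm_div_add_le {A B C P : V} (hAB : A ≠ B) (hCA : C ≠ A)
    (h : 0 ≤ ω (A - P) (B - P) * ω (C - P) (A - P)) :
    ‖A - B‖ * (|ω (C - P) (A - P)| / ‖C - A‖) + ‖C - A‖ * (|ω (A - P) (B - P)| / ‖A - B‖) ≤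
      ‖B - C‖ * ‖A - P‖ := by
  have hc : 0 < ‖A - B‖ := norm_pos_iff.2 (sub_ne_zero.2 hAB)
  have hb : 0 < ‖C - A‖ := norm_pos_iff.2 (sub_ne_zero.2 hCA)
  have hu : ω (A - P) (B - A) = ω (A - P) (B - P) := by
    rw [← sub_sub_sub_cancel_right B A P, map_sub, o.areaForm_apply_self, sub_zero]
  have hv : ω (A - P) (C - A) = -ω (C - P) (A - P) := by
    rw [← sub_sub_sub_cancel_right C A P, map_sub, o.areaForm_apply_self, sub_zero,
      o.areaForm_swap]
  have key := norm_sq_mul_abs_areaForm_add_le o (x := A - P) (u := B - A) (v := C - A)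
    (by rw [hu, hv]; linarith)
  rw [hu, hv, abs_neg, norm_sub_rev B A, sub_sub_sub_cancel_right] at key
  rw [← mul_le_mul_iff_of_pos_right (mul_pos hb hc)]
  calc _ = ‖A - B‖ ^ 2 * |ω (C - P) (A - P)| + ‖C - A‖ ^ 2 * |ω (A - P) (B - P)| := by
        field_simp
    _ ≤ ‖A - P‖ * (‖A - B‖ * ‖C - A‖ * ‖B - C‖) := key
    _ = _ := by ring

end AreaForm

/-- **Erdős–Mordell Inequality.** Let `P` be a point inside or on the boundary of a triangle
`ABC` in the Euclidean plane (i.e. `P` lies in the convex hull of `{A, B, C}`). Then the sum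
of the distances from `P` to the three vertices is at least twice the sum of the distances
from `P` to the three side lines. -/
theorem erdos_mordell (A B C P : EuclideanSpace ℝ (Fin 2))
    (h : AffineIndependent ℝ ![A, B, C])
    (hP : P ∈ convexHull ℝ ({A, B, C} : Set (EuclideanSpace ℝ (Fin 2)))) :
    dist P A + dist P B + dist P C ≥
      2 * (Metric.infDist P (affineSpan ℝ ({B, C} : Set (EuclideanSpace ℝ (Fin 2))) : Set _) +
           Metric.infDist P (affineSpan ℝ ({C, A} : Set (EuclideanSpace ℝ (Fin 2))) : Set _) +
           Metric.infDist P (affineSpan ℝ ({A, B} : Set (EuclideanSpace ℝ (Fin 2))) : Set _)) := by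
  have : Fact (finrank ℝ (EuclideanSpace ℝ (Fin 2)) = 2) := ⟨finrank_euclideanSpace_fin⟩
  let o := (EuclideanSpace.basisFun (Fin 2) ℝ).toBasis.orientation
  have hAB : A ≠ B := h.injective.ne (by decide : (0 : Fin 3) ≠ 1)
  have hBC : B ≠ C := h.injective.ne (by decide : (1 : Fin 3) ≠ 2)
  have hCA : C ≠ A := h.injective.ne (by decide : (2 : Fin 3) ≠ 0)
  have hPB : P ∈ convexHull ℝ {B, C, A} := by rwa [Set.pair_comm C A, Set.insert_comm B A]
  have hPC : P ∈ convexHull ℝ {C, A, B} := by rwa [Set.insert_comm C A, Set.pair_comm C B]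
  rw [ge_iff_le, dist_eq_norm', dist_eq_norm', dist_eq_norm']
  refine le_trans ?_ (two_mul_add_add_le_of_mul_add_mul_le
    (norm_pos_iff.2 (sub_ne_zero.2 hBC)) (norm_pos_iff.2 (sub_ne_zero.2 hCA))
    (norm_pos_iff.2 (sub_ne_zero.2 hAB)) (by positivity) (by positivity) (by positivity)
    (mul_abs_areaForm_div_add_le o hAB hCA
      (areaForm_mul_areaForm_nonneg_of_mem_convexHull o hP))
    (mul_abs_areaForm_div_add_le o hBC hAB
      (areaForm_mul_areaForm_nonneg_of_mem_convexHull o hPB))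
    (mul_abs_areaForm_div_add_le o hCA hBC
      (areaForm_mul_areaForm_nonneg_of_mem_convexHull o hPC)))
  gcongr
  · exact infDist_affineSpan_pair_le o hBC P
  · exact infDist_affineSpan_pair_le o hCA P
  · exact infDist_affineSpan_pair_le o hAB P
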